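/- For all integers m, n ≥ 0 and all z ∈ ℝ, 1/V_{m+n}(z) ≤ 1/V_m(z) + 1/V_n(z). -/
import Mathlib


open MeasureTheory Real

open Set

lemma wallis_bound (k : ℕ) :
    π * k * ((2 * k).factorial : ℝ) ^ 2 ≤ 16 ^ k * (k.factorial : ℝ) ^ 4 := by
  have h1 := Real.Wallis.le_W k
  have h2 := Real.Wallis.W_eq_factorial_ratio k
  rw [h2, div_mul_eq_mul_div, div_le_div_iff₀ (by positivity) (by positivity)] at h1
  set F : ℝ := ((2 * k).factorial : ℝ) ^ 2 with hF
  set G : ℝ := (k.factorial : ℝ) ^ 4 with hG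
  have h16 : (16 : ℝ) ^ k = 2 ^ (4 * k) := by rw [pow_mul]; norm_num
  have hFpos : (0:ℝ) < F := by positivity
  have hpi : 0 < π := Real.pi_pos
  have key : π * (k:ℝ) * F * (2 * (k:ℝ) + 2) ≤ (2 * (k:ℝ) + 1) * (π / 2) * (F * (2 * (k:ℝ) + 1)) := by
    nlinarith [mul_pos hpi hFpos, (Nat.cast_nonneg k : (0:ℝ) ≤ k), sq_nonneg ((k:ℝ)),
      mul_nonneg (mul_nonneg hpi.le hFpos.le) ((Nat.cast_nonneg k : (0:ℝ) ≤ k))]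
  have h3 : π * (k:ℝ) * F * (2 * (k:ℝ) + 2) ≤ 2 ^ (4 * k) * G * (2 * (k:ℝ) + 2) :=
    key.trans h1
  rw [h16]
  exact le_of_mul_le_mul_right h3 (by positivity)

lemma Gamma_half_formula (k : ℕ) :
    Real.Gamma ((k:ℝ) + 1/2) = Real.sqrt π * ((2*k).factorial : ℝ) / (4 ^ k * (k.factorial : ℝ)) := by
  induction k with
  | zero =>
    rw [show ((0:ℕ):ℝ) + 1/2 = 1/2 by norm_num, Real.Gamma_one_half_eq]
    simp
  | succ n ih =>
    have h0 : ((n:ℝ) + 1/2) ≠ 0 := by positivity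
    have he : ((n+1 : ℕ):ℝ) + 1/2 = ((n:ℝ) + 1/2) + 1 := by push_cast; ring
    rw [he, Real.Gamma_add_one h0, ih]
    rw [show 2*(n+1) = (2*n+1)+1 by ring, Nat.factorial_succ ((2*n+1)), Nat.factorial_succ (2*n),
      Nat.factorial_succ n]
    have h4 : (4:ℝ)^(n+1) = 4 * 4^n := by ring
    push_cast
    rw [h4]
    have hfn : ((n.factorial : ℝ)) ≠ 0 := by positivity
    have h4n : (4:ℝ)^n ≠ 0 := by positivity
    field_simp
    ring

lemma Gamma_half_le (k : ℕ) (hk : 1 ≤ k) :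
    Real.Gamma ((k:ℝ) + 1/2) * Real.sqrt k ≤ (k.factorial : ℝ) := by
  rw [Gamma_half_formula, div_mul_eq_mul_div, div_le_iff₀ (by positivity)]
  set x : ℝ := Real.sqrt π * Real.sqrt k with hx
  set F : ℝ := ((2*k).factorial : ℝ) with hF
  set R : ℝ := (k.factorial : ℝ) * (4 ^ k * (k.factorial : ℝ)) with hR
  have hxnn : 0 ≤ x := by positivity
  have hFnn : (0:ℝ) ≤ F := by positivity
  have hRpos : 0 < R := by positivity
  have hx2 : x^2 = π * k := by
    rw [hx, mul_pow, Real.sq_sqrt Real.pi_pos.le, Real.sq_sqrt (Nat.cast_nonneg k)]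
  have h16 : ((4:ℝ)^k)^2 = 16^k := by
    rw [← pow_mul, show ((16:ℝ)) = 4^2 by norm_num, ← pow_mul, mul_comm]
  have hsq : x^2 * F^2 ≤ R^2 := by
    have hR2 : R^2 = 16^k * (k.factorial:ℝ)^4 := by rw [hR, ← h16]; ring
    rw [hx2, hR2, hF]
    exact wallis_bound k
  have hgoal : Real.sqrt π * F * Real.sqrt k = x * F := by rw [hx]; ring
  rw [hgoal]
  nlinarith [mul_nonneg hxnn hFnn, hRpos]

lemma integrable_pow_exp (k : ℕ) :
    IntegrableOn (fun t : ℝ => t ^ k * Real.exp (-t)) (Ioi 0) := by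
  have h := Real.GammaIntegral_convergent (show (0:ℝ) < (k:ℝ) + 1 by positivity)
  apply h.congr_fun _ measurableSet_Ioi
  intro x hx
  simp only
  rw [show (k:ℝ) + 1 - 1 = (k:ℝ) by ring, Real.rpow_natCast]
  ring

lemma integral_pow_exp (k : ℕ) :
    ∫ t in Ioi (0:ℝ), t ^ k * Real.exp (-t) = (k.factorial : ℝ) := by
  have h := Real.Gamma_eq_integral (show (0:ℝ) < (k:ℝ) + 1 by positivity)
  rw [show ((k:ℝ) + 1) = ((k:ℕ) + 1 : ℝ) by push_cast; ring] at h
  rw [Real.Gamma_nat_eq_factorial] at h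
  rw [show ((k:ℕ):ℝ) + 1 - 1 = (k:ℝ) by push_cast; ring] at h
  rw [h]
  refine setIntegral_congr_fun measurableSet_Ioi fun x hx => ?_
  rw [Real.rpow_natCast]
  ring

lemma f_meas (B z : ℝ) (k : ℕ) :
    Measurable (fun t : ℝ => t ^ k * Real.exp (-t) / Real.sqrt (2*t/B + z^2)) := by
  fun_prop

lemma f_le_g (B z : ℝ) (hB : 0 < B) (k : ℕ) {t : ℝ} (ht : t ∈ Ioi (0:ℝ)) :
    t ^ k * Real.exp (-t) / Real.sqrt (2*t/B + z^2)
      ≤ Real.sqrt (B/2) * (Real.exp (-t) * t ^ ((k:ℝ) + 1/2 - 1)) := by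
  have ht0 : (0:ℝ) < t := ht
  have h1 : Real.sqrt t ≤ Real.sqrt (B/2) * Real.sqrt (2*t/B + z^2) := by
    rw [← Real.sqrt_mul (by positivity : (0:ℝ) ≤ B/2)]
    apply Real.sqrt_le_sqrt
    rw [show B/2 * (2*t/B + z^2) = t + B/2*z^2 by field_simp]
    nlinarith [sq_nonneg z, hB.le]
  have hg : Real.sqrt (B/2) * (Real.exp (-t) * t ^ ((k:ℝ) + 1/2 - 1))
      = Real.sqrt (B/2) * (t ^ k * Real.exp (-t)) / Real.sqrt t := by
    rw [show (k:ℝ) + 1/2 - 1 = (k:ℝ) - (1/2:ℝ) by ring, Real.rpow_sub ht0,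
      Real.rpow_natCast, ← Real.sqrt_eq_rpow]
    ring
  rw [hg, div_le_div_iff₀ (Real.sqrt_pos.mpr (by positivity)) (Real.sqrt_pos.mpr ht0)]
  have h2 : 0 ≤ t ^ k * Real.exp (-t) := by positivity
  nlinarith [mul_le_mul_of_nonneg_left h1 h2]

lemma f_integrable (B z : ℝ) (hB : 0 < B) (k : ℕ) :
    IntegrableOn (fun t : ℝ => t ^ k * Real.exp (-t) / Real.sqrt (2*t/B + z^2)) (Ioi 0) := by
  have hg : IntegrableOn
      (fun t : ℝ => Real.sqrt (B/2) * (Real.exp (-t) * t ^ ((k:ℝ) + 1/2 - 1))) (Ioi 0) :=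
    (Real.GammaIntegral_convergent (by positivity : (0:ℝ) < (k:ℝ) + 1/2)).const_mul _
  refine Integrable.mono hg ((f_meas B z k).aestronglyMeasurable) ?_
  rw [ae_restrict_iff' measurableSet_Ioi]
  refine ae_of_all _ fun t ht => ?_
  have ht0 : (0:ℝ) < t := ht
  have hf0 : 0 ≤ t ^ k * Real.exp (-t) / Real.sqrt (2*t/B + z^2) := by positivity
  rw [Real.norm_eq_abs, Real.norm_eq_abs, abs_of_nonneg hf0,
    abs_of_nonneg (by positivity : (0:ℝ) ≤ Real.sqrt (B/2) * (Real.exp (-t) * t ^ ((k:ℝ) + 1/2 - 1)))]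
  exact f_le_g B z hB k ht

lemma f_integral_le (B z : ℝ) (hB : 0 < B) (k : ℕ) :
    ∫ t in Ioi (0:ℝ), t ^ k * Real.exp (-t) / Real.sqrt (2*t/B + z^2)
      ≤ Real.sqrt (B/2) * Real.Gamma ((k:ℝ) + 1/2) := by
  have hg : IntegrableOn
      (fun t : ℝ => Real.sqrt (B/2) * (Real.exp (-t) * t ^ ((k:ℝ) + 1/2 - 1))) (Ioi 0) :=
    (Real.GammaIntegral_convergent (by positivity : (0:ℝ) < (k:ℝ) + 1/2)).const_mul _
  have h := setIntegral_mono_on (f_integrable B z hB k) hg measurableSet_Ioi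
    (fun t ht => f_le_g B z hB k ht)
  rw [integral_const_mul, ← Real.Gamma_eq_integral (by positivity : (0:ℝ) < (k:ℝ) + 1/2)] at h
  exact h

/-- The potential `V_m(z) = ∫_0^∞ (tᵐ e^{-t}/m!) / √(2t/B + z²) dt`. -/
noncomputable def Vm (B : ℝ) (m : ℕ) (z : ℝ) : ℝ :=
  ∫ t in Set.Ioi (0 : ℝ), (t ^ m * Real.exp (-t) / (Nat.factorial m)) / Real.sqrt (2 * t / B + z ^ 2)

lemma Vm_eq (B z : ℝ) (k : ℕ) :
    Vm B k z = (∫ t in Ioi (0:ℝ), t ^ k * Real.exp (-t) / Real.sqrt (2*t/B + z^2))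
      / (k.factorial : ℝ) := by
  rw [Vm, ← integral_div]
  exact setIntegral_congr_fun measurableSet_Ioi fun t ht => by ring

lemma Vm_lower (B z : ℝ) (hB : 0 < B) (k : ℕ) :
    1 / Real.sqrt (2*((k:ℝ)+1)/B + z^2) ≤ Vm B k z := by
  set r : ℝ := Real.sqrt (2*((k:ℝ)+1)/B + z^2) with hrdef
  have hr : 0 < r := Real.sqrt_pos.mpr (by positivity)
  have hr2 : r^2 = 2*((k:ℝ)+1)/B + z^2 := Real.sq_sqrt (by positivity)
  set a1 : ℝ := 3/(2*r) - z^2/(2*r^3) with ha1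
  set a2 : ℝ := -(2/B)/(2*r^3) with ha2
  have hIntL : IntegrableOn
      (fun t : ℝ => a1 * (t ^ k * Real.exp (-t)) + a2 * (t ^ (k+1) * Real.exp (-t))) (Ioi 0) :=
    ((integrable_pow_exp k).const_mul a1).add ((integrable_pow_exp (k+1)).const_mul a2)
  have hL : ∫ t in Ioi (0:ℝ),
      (a1 * (t ^ k * Real.exp (-t)) + a2 * (t ^ (k+1) * Real.exp (-t)))
      = a1 * (k.factorial : ℝ) + a2 * ((k+1).factorial : ℝ) := by
    rw [integral_add ((integrable_pow_exp k).const_mul a1) ((integrable_pow_exp (k+1)).const_mul a2),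
      integral_const_mul, integral_const_mul, integral_pow_exp, integral_pow_exp]
  have hpt : ∀ t ∈ Ioi (0:ℝ),
      a1 * (t ^ k * Real.exp (-t)) + a2 * (t ^ (k+1) * Real.exp (-t))
        ≤ t ^ k * Real.exp (-t) / Real.sqrt (2*t/B + z^2) := by
    intro t ht
    have ht0 : (0:ℝ) < t := ht
    set s : ℝ := Real.sqrt (2*t/B + z^2) with hsdef
    have hs : 0 < s := Real.sqrt_pos.mpr (by positivity)
    have hs2 : s^2 = 2*t/B + z^2 := Real.sq_sqrt (by positivity)
    have key : a1 + a2 * t ≤ 1/s := by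
      have hform : a1 + a2 * t = (3*r^2 - s^2)/(2*r^3) := by
        rw [ha1, ha2, eq_div_iff (by positivity : (2:ℝ)*r^3 ≠ 0), hs2]
        field_simp
        ring
      rw [hform, div_le_div_iff₀ (by positivity) hs]
      nlinarith [mul_nonneg (sq_nonneg (s - r)) (by positivity : (0:ℝ) ≤ s + 2*r)]
    have hnn : (0:ℝ) ≤ t ^ k * Real.exp (-t) := by positivity
    have := mul_le_mul_of_nonneg_left key hnn
    calc a1 * (t ^ k * Real.exp (-t)) + a2 * (t ^ (k+1) * Real.exp (-t))
        = (t ^ k * Real.exp (-t)) * (a1 + a2 * t) := by ring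
      _ ≤ (t ^ k * Real.exp (-t)) * (1/s) := this
      _ = t ^ k * Real.exp (-t) / s := by ring
  have hmono := setIntegral_mono_on hIntL (f_integrable B z hB k) measurableSet_Ioi hpt
  rw [hL] at hmono
  have hr3 : 2*((k:ℝ)+1)/B = r^2 - z^2 := by linarith [hr2]
  have hfac : (((k+1).factorial : ℕ) : ℝ) = ((k:ℝ)+1) * (k.factorial : ℝ) := by
    rw [Nat.factorial_succ]; push_cast; ring
  have hsum : a1 + a2 * ((k:ℝ)+1) = 1/r := by
    rw [ha1, ha2]
    have h2 : -(2 / B) / (2 * r ^ 3) * ((k:ℝ)+1) = -((2*((k:ℝ)+1)/B)/(2*r^3)) := by ring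
    rw [h2, hr3]
    have h1 : r ≠ 0 := ne_of_gt hr
    field_simp
    ring
  have hval : a1 * (k.factorial : ℝ) + a2 * ((k+1).factorial : ℝ) = (k.factorial : ℝ) / r := by
    rw [hfac]
    calc a1 * (k.factorial : ℝ) + a2 * (((k:ℝ)+1) * (k.factorial : ℝ))
        = (a1 + a2 * ((k:ℝ)+1)) * (k.factorial : ℝ) := by ring
      _ = (1/r) * (k.factorial : ℝ) := by rw [hsum]
      _ = (k.factorial : ℝ) / r := by ring
  rw [hval] at hmono
  rw [Vm_eq]
  rw [div_le_div_iff₀ (by positivity) (by positivity : (0:ℝ) < (k.factorial : ℝ))]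
  calc 1 * (k.factorial : ℝ) = (k.factorial : ℝ) := one_mul _
    _ ≤ (∫ t in Ioi (0:ℝ), t ^ k * Real.exp (-t) / Real.sqrt (2*t/B + z^2)) * r := by
        rw [div_le_iff₀ hr] at hmono
        linarith

lemma Vm_pos (B z : ℝ) (hB : 0 < B) (k : ℕ) : 0 < Vm B k z :=
  lt_of_lt_of_le (by positivity) (Vm_lower B z hB k)


lemma Vm_upper_c (B z : ℝ) (hB : 0 < B) (k : ℕ) (hk : 1 ≤ k) :
    Vm B k z ≤ 1 / Real.sqrt (2*(k:ℝ)/B) := by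
  have hk0 : (0:ℝ) < (k:ℝ) := by exact_mod_cast hk
  have hsk : 0 < Real.sqrt (k:ℝ) := Real.sqrt_pos.mpr hk0
  have hfac : (0:ℝ) < (k.factorial : ℝ) := by positivity
  have hG : Real.Gamma ((k:ℝ) + 1/2) ≤ (k.factorial : ℝ) / Real.sqrt (k:ℝ) := by
    rw [le_div_iff₀ hsk]; exact Gamma_half_le k hk
  have h1 : Vm B k z ≤ Real.sqrt (B/2) * Real.Gamma ((k:ℝ) + 1/2) / (k.factorial : ℝ) := by
    rw [Vm_eq]
    gcongr
    exact f_integral_le B z hB k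
  have h2 : Real.sqrt (B/2) * Real.Gamma ((k:ℝ) + 1/2) / (k.factorial : ℝ)
      ≤ Real.sqrt (B/2) / Real.sqrt (k:ℝ) := by
    have hstep : Real.sqrt (B/2) * Real.Gamma ((k:ℝ) + 1/2) / (k.factorial : ℝ)
        ≤ Real.sqrt (B/2) * ((k.factorial : ℝ) / Real.sqrt (k:ℝ)) / (k.factorial : ℝ) := by
      gcongr
    calc Real.sqrt (B/2) * Real.Gamma ((k:ℝ) + 1/2) / (k.factorial : ℝ)
        ≤ Real.sqrt (B/2) * ((k.factorial : ℝ) / Real.sqrt (k:ℝ)) / (k.factorial : ℝ) := hstep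
      _ = Real.sqrt (B/2) / Real.sqrt (k:ℝ) := by field_simp
  have heq : Real.sqrt (B/2) / Real.sqrt (k:ℝ) = 1 / Real.sqrt (2*(k:ℝ)/B) := by
    rw [one_div, ← Real.sqrt_inv, ← Real.sqrt_div (by positivity : (0:ℝ) ≤ B/2)]
    congr 1
    field_simp
  exact (h1.trans h2).trans_eq heq

lemma Vm_upper_a (B z : ℝ) (hB : 0 < B) (k : ℕ) (hz : z ≠ 0) :
    Vm B k z ≤ 1 / Real.sqrt (z^2) := by
  have hz2 : (0:ℝ) < z^2 := by positivity
  have hsz : 0 < Real.sqrt (z^2) := Real.sqrt_pos.mpr hz2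
  have hfac : (0:ℝ) < (k.factorial : ℝ) := by positivity
  have hInt2 : IntegrableOn (fun t : ℝ => (t ^ k * Real.exp (-t)) * (1/Real.sqrt (z^2))) (Ioi 0) :=
    (integrable_pow_exp k).mul_const _
  have hpt : ∀ t ∈ Ioi (0:ℝ), t ^ k * Real.exp (-t) / Real.sqrt (2*t/B + z^2)
      ≤ (t ^ k * Real.exp (-t)) * (1/Real.sqrt (z^2)) := by
    intro t ht
    have ht0 : (0:ℝ) < t := ht
    have hle : Real.sqrt (z^2) ≤ Real.sqrt (2*t/B + z^2) := by
      apply Real.sqrt_le_sqrt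
      have h4 : 0 < 2*t/B := by positivity
      linarith
    have h3 : 1/Real.sqrt (2*t/B + z^2) ≤ 1/Real.sqrt (z^2) :=
      one_div_le_one_div_of_le hsz hle
    calc t ^ k * Real.exp (-t) / Real.sqrt (2*t/B + z^2)
        = (t ^ k * Real.exp (-t)) * (1/Real.sqrt (2*t/B + z^2)) := by ring
      _ ≤ (t ^ k * Real.exp (-t)) * (1/Real.sqrt (z^2)) :=
          mul_le_mul_of_nonneg_left h3 (by positivity)
  have hmono := setIntegral_mono_on (f_integrable B z hB k) hInt2 measurableSet_Ioi hpt
  rw [integral_mul_const, integral_pow_exp] at hmono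
  rw [Vm_eq, div_le_iff₀ hfac]
  calc (∫ t in Ioi (0:ℝ), t ^ k * Real.exp (-t) / Real.sqrt (2*t/B + z^2))
      ≤ (k.factorial : ℝ) * (1/Real.sqrt (z^2)) := hmono
    _ = 1 / Real.sqrt (z^2) * (k.factorial : ℝ) := by ring

lemma inv_Vm_le (B z : ℝ) (hB : 0 < B) (k : ℕ) :
    (Vm B k z)⁻¹ ≤ Real.sqrt (2*((k:ℝ)+1)/B + z^2) := by
  have hlow := Vm_lower B z hB k
  calc (Vm B k z)⁻¹ ≤ (1 / Real.sqrt (2*((k:ℝ)+1)/B + z^2))⁻¹ :=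
        inv_anti₀ (by positivity) hlow
    _ = Real.sqrt (2*((k:ℝ)+1)/B + z^2) := by rw [one_div, inv_inv]

lemma inv_Vm_ge (B z : ℝ) (hB : 0 < B) (k : ℕ) (hk : 1 ≤ k) :
    Real.sqrt (max (z^2) (2*(k:ℝ)/B)) ≤ (Vm B k z)⁻¹ := by
  have hV := Vm_pos B z hB k
  have hk0 : (0:ℝ) < (k:ℝ) := by exact_mod_cast hk
  rcases le_total (z^2) (2*(k:ℝ)/B) with h | h
  · rw [max_eq_right h]
    calc Real.sqrt (2*(k:ℝ)/B) = (1 / Real.sqrt (2*(k:ℝ)/B))⁻¹ := by rw [one_div, inv_inv]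
      _ ≤ (Vm B k z)⁻¹ := inv_anti₀ hV (Vm_upper_c B z hB k hk)
  · rw [max_eq_left h]
    have hc0 : (0:ℝ) < 2*(k:ℝ)/B := by positivity
    have hz : z ≠ 0 := by
      intro h0
      rw [h0] at h
      norm_num at h
      nlinarith
    calc Real.sqrt (z^2) = (1 / Real.sqrt (z^2))⁻¹ := by rw [one_div, inv_inv]
      _ ≤ (Vm B k z)⁻¹ := inv_anti₀ hV (Vm_upper_a B z hB k hz)

lemma sqrt_max_add {u c cm cn : ℝ} (hu : 0 ≤ u) (hc : 0 < c) (hm : c ≤ cm) (hn : c ≤ cn) :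
    Real.sqrt (u + cm + cn + c) ≤ Real.sqrt (max u cm) + Real.sqrt (max u cn) := by
  set s : ℝ := Real.sqrt (max u cm) with hsdef
  set t : ℝ := Real.sqrt (max u cn) with htdef
  have hsn : 0 ≤ s := Real.sqrt_nonneg _
  have htn : 0 ≤ t := Real.sqrt_nonneg _
  have hs2 : s^2 = max u cm := Real.sq_sqrt (le_max_of_le_left hu)
  have ht2 : t^2 = max u cn := Real.sq_sqrt (le_max_of_le_left hu)
  have hsu : Real.sqrt u ≤ s := Real.sqrt_le_sqrt (le_max_left _ _)
  have htu : Real.sqrt u ≤ t := Real.sqrt_le_sqrt (le_max_left _ _)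
  have hsc : Real.sqrt c ≤ s := Real.sqrt_le_sqrt (hm.trans (le_max_right _ _))
  have htc : Real.sqrt c ≤ t := Real.sqrt_le_sqrt (hn.trans (le_max_right _ _))
  have hstu : u ≤ s * t := by
    calc u = Real.sqrt u * Real.sqrt u := (Real.mul_self_sqrt hu).symm
      _ ≤ s * t := mul_le_mul hsu htu (Real.sqrt_nonneg _) hsn
  have hstc : c ≤ s * t := by
    calc c = Real.sqrt c * Real.sqrt c := (Real.mul_self_sqrt hc.le).symm
      _ ≤ s * t := mul_le_mul hsc htc (Real.sqrt_nonneg _) hsn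
  have hmax1 : cm ≤ s^2 := hs2 ▸ le_max_right _ _
  have hmax2 : cn ≤ t^2 := ht2 ▸ le_max_right _ _
  have hle : u + cm + cn + c ≤ (s + t)^2 := by nlinarith
  calc Real.sqrt (u + cm + cn + c) ≤ Real.sqrt ((s+t)^2) := Real.sqrt_le_sqrt hle
    _ = s + t := Real.sqrt_sq (by positivity)

/-- `1/V_{m+n}(z) ≤ 1/V_m(z) + 1/V_n(z)`. -/
theorem inv_Vm_subadditive (B : ℝ) (hB : 0 < B) (m n : ℕ) (z : ℝ) :
    (Vm B (m + n) z)⁻¹ ≤ (Vm B m z)⁻¹ + (Vm B n z)⁻¹ := by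
  rcases Nat.eq_zero_or_pos m with hm | hm
  · subst hm
    rw [Nat.zero_add]
    have h0 : 0 ≤ (Vm B 0 z)⁻¹ := inv_nonneg.mpr (Vm_pos B z hB 0).le
    linarith
  rcases Nat.eq_zero_or_pos n with hn | hn
  · subst hn
    rw [Nat.add_zero]
    have h0 : 0 ≤ (Vm B 0 z)⁻¹ := inv_nonneg.mpr (Vm_pos B z hB 0).le
    linarith
  have key := sqrt_max_add (u := z^2) (c := 2/B) (cm := 2*(m:ℝ)/B) (cn := 2*(n:ℝ)/B)
    (by positivity) (by positivity) ?_ ?_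
  · have h1 := inv_Vm_le B z hB (m+n)
    have h2 := inv_Vm_ge B z hB m hm
    have h3 := inv_Vm_ge B z hB n hn
    have harg : 2*(((m+n:ℕ):ℝ)+1)/B + z^2 = z^2 + 2*(m:ℝ)/B + 2*(n:ℝ)/B + 2/B := by
      push_cast
      field_simp
      ring
    rw [harg] at h1
    linarith
  · rw [div_le_div_iff₀ hB hB]
    have : (1:ℝ) ≤ (m:ℝ) := by exact_mod_cast hm
    nlinarith
  · rw [div_le_div_iff₀ hB hB]
    have : (1:ℝ) ≤ (n:ℝ) := by exact_mod_cast hn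
    nlinarith
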